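/- arXiv:2205.02263 — 5 statements merged into one kernel-verified Lean document; each statement's English description precedes it below -/
import Mathlib

section
/- Let f₁, g₁ : ℝ² → ℝ be smooth with g₁(0,y₀) ≠ f₁(0,y₀), and let φ be a transition function. If (x₀, y₀) lies on the critical set, i.e. (f₁(0,y₀)+g₁(0,y₀)) + φ(x₀)(f₁(0,y₀)−g₁(0,y₀)) = 0, then φ(x₀) = (g₁(0,y₀)+f₁(0,y₀))/(g₁(0,y₀)−f₁(0,y₀)), and the slow dynamics (f₂+g₂)/2 + φ(x₀)(f₂−g₂)/2 evaluated at (0,y₀) equals the Filippov sliding vector field component (f₂ g₁' − g₂ f₁')/(g₁' − f₁') with f₁' = f₁(0,y₀), g₁' = g₁(0,y₀), f₂ = f₂(0,y₀), g₂ = g₂(0,y₀); namely (f₂·g₁' − g₂·f₁')/(g₁' − f₁'). -/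
theorem stmt_7 (f₁ g₁ f₂ g₂ : ℝ → ℝ → ℝ) (φ : ℝ → ℝ) (x₀ y₀ : ℝ)
    (hf₁ : ContDiff ℝ (⊤ : ℕ∞) (Function.uncurry f₁)) (hg₁ : ContDiff ℝ (⊤ : ℕ∞) (Function.uncurry g₁))
    (hφs : ContDiff ℝ (⊤ : ℕ∞) φ)
    (hφm : ∀ t ≤ (-1 : ℝ), φ t = -1) (hφp : ∀ t, (1 : ℝ) ≤ t → φ t = 1)
    (hne : g₁ 0 y₀ ≠ f₁ 0 y₀)
    (hcrit : (f₁ 0 y₀ + g₁ 0 y₀) + φ x₀ * (f₁ 0 y₀ - g₁ 0 y₀) = 0) :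
    φ x₀ = (g₁ 0 y₀ + f₁ 0 y₀) / (g₁ 0 y₀ - f₁ 0 y₀) ∧
    (f₂ 0 y₀ + g₂ 0 y₀) / 2 + φ x₀ * (f₂ 0 y₀ - g₂ 0 y₀) / 2
      = (f₂ 0 y₀ * g₁ 0 y₀ - g₂ 0 y₀ * f₁ 0 y₀) / (g₁ 0 y₀ - f₁ 0 y₀) := by
  have hd : g₁ 0 y₀ - f₁ 0 y₀ ≠ 0 := sub_ne_zero.mpr hne
  have h1 : φ x₀ = (g₁ 0 y₀ + f₁ 0 y₀) / (g₁ 0 y₀ - f₁ 0 y₀) := by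
    field_simp
    linarith
  refine ⟨h1, ?_⟩
  rw [h1]
  field_simp
  ring
end

section
/- There is no transition function φ (of class C³ or smoother) for which the linearly regularized slow-fast system εẋ = (f₁+g₁)/2 + φ(x)(f₁−g₁)/2, ẏ = (f₂+g₂)/2 + φ(x)(f₂−g₂)/2 has a generic SF-pitchfork singularity at the origin. Concretely: if f denotes f(x,y) = (f₁(0,y)+g₁(0,y))/2 + φ(x)(f₁(0,y)−g₁(0,y))/2, then the pitchfork conditions f(0,0) = f_x(0,0) = f_xx(0,0) = f_y(0,0) = 0, f_xxx(0,0) ≠ 0, f_xy(0,0) ≠ 0 cannot all hold simultaneously. -/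
theorem stmt_9 (f₁ g₁ : ℝ → ℝ → ℝ) (φ : ℝ → ℝ) (f : ℝ → ℝ → ℝ)
    (hf₁ : ContDiff ℝ (⊤ : ℕ∞) (Function.uncurry f₁)) (hg₁ : ContDiff ℝ (⊤ : ℕ∞) (Function.uncurry g₁))
    (hφs : ContDiff ℝ 3 φ)
    (hφm : ∀ t ≤ (-1 : ℝ), φ t = -1) (hφp : ∀ t, (1 : ℝ) ≤ t → φ t = 1)
    (hf : ∀ x y, f x y = (f₁ 0 y + g₁ 0 y) / 2 + φ x * (f₁ 0 y - g₁ 0 y) / 2) :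
    ¬ (f 0 0 = 0 ∧
       deriv (fun x => f x 0) 0 = 0 ∧
       iteratedDeriv 2 (fun x => f x 0) 0 = 0 ∧
       deriv (fun y => f 0 y) 0 = 0 ∧
       iteratedDeriv 3 (fun x => f x 0) 0 ≠ 0 ∧
       deriv (fun y => deriv (fun x => f x y) 0) 0 ≠ 0) := by
  rintro ⟨h0, h2, h3, h4, h5, h6⟩
  have hφd : Differentiable ℝ φ := hφs.differentiable (by norm_num)
  -- derivative in x of f · y at 0, for each y
  have hdx : ∀ y, deriv (fun x => f x y) 0 = deriv φ 0 * ((f₁ 0 y - g₁ 0 y) / 2) := by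
    intro y
    have : (fun x => f x y)
        = fun x => (f₁ 0 y + g₁ 0 y) / 2 + φ x * ((f₁ 0 y - g₁ 0 y) / 2) := by
      funext x; rw [hf]; ring
    rw [this, deriv_const_add, deriv_mul_const (hφd 0)]
  -- φ'(0) ≠ 0
  have hφ0 : deriv φ 0 ≠ 0 := by
    intro hz
    apply h6
    have : (fun y => deriv (fun x => f x y) 0) = fun _ => (0 : ℝ) := by
      funext y; rw [hdx y, hz, zero_mul]
    rw [this, deriv_const]
  -- f₁ 0 0 - g₁ 0 0 = 0
  have hc : f₁ 0 0 - g₁ 0 0 = 0 := by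
    have := h2
    rw [hdx 0] at this
    have h := mul_eq_zero.mp this
    rcases h with h | h
    · exact absurd h hφ0
    · linarith [h]
  -- then f · 0 is constant
  have hconst : (fun x => f x 0) = fun _ => (f₁ 0 0 + g₁ 0 0) / 2 := by
    funext x; rw [hf, hc]; ring
  apply h5
  rw [hconst]
  simp [iteratedDeriv_succ]
end

section
/- Suppose f₁, g₁ are smooth, φ is a C² transition function with φ'(0) = 0 and φ''(0) ≠ 0, f₁(0,0) − g₁(0,0) ≠ 0, φ(0) = (g₁+f₁)/(g₁−f₁) at (0,0), f₁,ᵧ(0,0) + g₁,ᵧ(0,0) + φ(0)(f₁,ᵧ(0,0) − g₁,ᵧ(0,0)) = 0, and the product ((f₁−g₁)(0,0)·φ''(0)) · ((1+φ(0))f₁,ᵧᵧ(0,0) + (1−φ(0))g₁,ᵧᵧ(0,0)) < 0. Then for f(x,y) = (f₁(0,y)+g₁(0,y))/2 + φ(x)(f₁(0,y)−g₁(0,y))/2 the SF-transcritical conditions hold at the origin: f = f_x = f_y = 0, f_xx ≠ 0, and det Hes(f) = f_xx f_yy − f_xy² < 0 at (0,0). -/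
theorem stmt_11 (f₁ g₁ : ℝ → ℝ → ℝ) (φ : ℝ → ℝ) (f : ℝ → ℝ → ℝ)
    (hf₁ : ContDiff ℝ (⊤ : ℕ∞) (Function.uncurry f₁)) (hg₁ : ContDiff ℝ (⊤ : ℕ∞) (Function.uncurry g₁))
    (hφs : ContDiff ℝ 2 φ)
    (hφm : ∀ t ≤ (-1 : ℝ), φ t = -1) (hφp : ∀ t, (1 : ℝ) ≤ t → φ t = 1)
    (hφ' : deriv φ 0 = 0)
    (hφ'' : iteratedDeriv 2 φ 0 ≠ 0)
    (hne : f₁ 0 0 - g₁ 0 0 ≠ 0)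
    (hφ0 : φ 0 = (g₁ 0 0 + f₁ 0 0) / (g₁ 0 0 - f₁ 0 0))
    (hdet : ((f₁ 0 0 - g₁ 0 0) * iteratedDeriv 2 φ 0) *
        ((1 + φ 0) * iteratedDeriv 2 (fun y => f₁ 0 y) 0
          + (1 - φ 0) * iteratedDeriv 2 (fun y => g₁ 0 y) 0) < 0)
    (hy : deriv (fun y => f₁ 0 y) 0 + deriv (fun y => g₁ 0 y) 0
        + φ 0 * (deriv (fun y => f₁ 0 y) 0 - deriv (fun y => g₁ 0 y) 0) = 0)
    (hf : ∀ x y, f x y = (f₁ 0 y + g₁ 0 y) / 2 + φ x * (f₁ 0 y - g₁ 0 y) / 2) :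
    f 0 0 = 0 ∧
    deriv (fun x => f x 0) 0 = 0 ∧
    deriv (fun y => f 0 y) 0 = 0 ∧
    iteratedDeriv 2 (fun x => f x 0) 0 ≠ 0 ∧
    iteratedDeriv 2 (fun x => f x 0) 0 * iteratedDeriv 2 (fun y => f 0 y) 0
      - (deriv (fun y => deriv (fun x => f x y) 0) 0) ^ 2 < 0 := by
  -- abbreviations
  set F : ℝ → ℝ := fun y => f₁ 0 y with hFdef
  set G : ℝ → ℝ := fun y => g₁ 0 y with hGdef
  have hF2 : ContDiff ℝ 2 F := by
    have : ContDiff ℝ (⊤ : ℕ∞) F :=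
      hf₁.comp (ContDiff.prodMk (contDiff_const (c := (0 : ℝ))) contDiff_id)
    exact this.of_le (by exact WithTop.coe_le_coe.mpr le_top)
  have hG2 : ContDiff ℝ 2 G := by
    have : ContDiff ℝ (⊤ : ℕ∞) G :=
      hg₁.comp (ContDiff.prodMk (contDiff_const (c := (0 : ℝ))) contDiff_id)
    exact this.of_le (by exact WithTop.coe_le_coe.mpr le_top)
  have hFd : Differentiable ℝ F := hF2.differentiable two_ne_zero
  have hGd : Differentiable ℝ G := hG2.differentiable two_ne_zero
  have hF'd : Differentiable ℝ (deriv F) := by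
    have := hF2.differentiable_iteratedDeriv 1 (by norm_num)
    rwa [iteratedDeriv_one] at this
  have hG'd : Differentiable ℝ (deriv G) := by
    have := hG2.differentiable_iteratedDeriv 1 (by norm_num)
    rwa [iteratedDeriv_one] at this
  have hφd : Differentiable ℝ φ := hφs.differentiable two_ne_zero
  have hφ'd : Differentiable ℝ (deriv φ) := by
    have := hφs.differentiable_iteratedDeriv 1 (by norm_num)
    rwa [iteratedDeriv_one] at this
  -- the x-section
  have hx0 : (fun x => f x 0) = fun x => (F 0 + G 0) / 2 + (F 0 - G 0) / 2 * φ x := by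
    funext x; rw [hf]; ring
  have hdx : deriv (fun x => f x 0) 0 = 0 := by
    rw [hx0, deriv_const_add, deriv_const_mul _ (hφd 0), hφ', mul_zero]
  have hdx2 : iteratedDeriv 2 (fun x => f x 0) 0
      = (F 0 - G 0) / 2 * iteratedDeriv 2 φ 0 := by
    rw [hx0, iteratedDeriv_succ, iteratedDeriv_one]
    have h1 : deriv (fun x => (F 0 + G 0) / 2 + (F 0 - G 0) / 2 * φ x)
        = fun x => (F 0 - G 0) / 2 * deriv φ x := by
      funext x
      rw [deriv_const_add, deriv_const_mul _ (hφd x)]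
    rw [h1, deriv_const_mul _ (hφ'd 0), iteratedDeriv_succ, iteratedDeriv_one]
  -- the y-section
  have hy0 : (fun y => f 0 y) = fun y => (1 + φ 0) / 2 * F y + (1 - φ 0) / 2 * G y := by
    funext y; rw [hf]; ring
  have hdy1 : deriv (fun y => f 0 y)
      = fun y => (1 + φ 0) / 2 * deriv F y + (1 - φ 0) / 2 * deriv G y := by
    funext y
    rw [hy0, deriv_fun_add ((hFd y).const_mul _) ((hGd y).const_mul _),
      deriv_const_mul _ (hFd y), deriv_const_mul _ (hGd y)]
  have hdy : deriv (fun y => f 0 y) 0 = 0 := by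
    rw [hdy1]
    have := hy
    simp only [← hFdef, ← hGdef] at this ⊢
    nlinarith [this]
  have hdy2 : iteratedDeriv 2 (fun y => f 0 y) 0
      = (1 + φ 0) / 2 * iteratedDeriv 2 F 0 + (1 - φ 0) / 2 * iteratedDeriv 2 G 0 := by
    rw [iteratedDeriv_succ, iteratedDeriv_one, hdy1,
      deriv_fun_add ((hF'd 0).const_mul _) ((hG'd 0).const_mul _),
      deriv_const_mul _ (hF'd 0), deriv_const_mul _ (hG'd 0),
      iteratedDeriv_succ, iteratedDeriv_one, iteratedDeriv_succ, iteratedDeriv_one]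
  -- the mixed derivative vanishes
  have hmix : (fun y => deriv (fun x => f x y) 0) = fun _ => (0 : ℝ) := by
    funext y
    have hxy : (fun x => f x y) = fun x => (F y + G y) / 2 + (F y - G y) / 2 * φ x := by
      funext x; rw [hf]; ring
    rw [hxy, deriv_const_add, deriv_const_mul _ (hφd 0), hφ', mul_zero]
  -- conclusion
  have hF0G0 : F 0 - G 0 ≠ 0 := hne
  have hfxx : iteratedDeriv 2 (fun x => f x 0) 0 ≠ 0 := by
    rw [hdx2]
    exact mul_ne_zero (by simpa using div_ne_zero hF0G0 two_ne_zero) hφ''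
  refine ⟨?_, hdx, hdy, hfxx, ?_⟩
  · rw [hf]
    have h1 : g₁ 0 0 - f₁ 0 0 ≠ 0 := fun h => hne (by linarith)
    rw [hφ0]
    field_simp
    ring
  · rw [hmix]
    simp only [deriv_const]
    rw [hdx2, hdy2]
    have hd : ((f₁ 0 0 - g₁ 0 0) * iteratedDeriv 2 φ 0) *
        ((1 + φ 0) * iteratedDeriv 2 F 0 + (1 - φ 0) * iteratedDeriv 2 G 0) < 0 := hdet
    nlinarith [hd]
end

section
/- Consider the regular-cusp PSVF with F(x,y) = x, X = (f₁,f₂), Y = (g₁,g₂), satisfying f₁(0,0) = 0, f₁,ᵧ(0,0) = 0, f₁,ᵧᵧ(0,0) ≠ 0 (with f₂(0,0) ≠ 0) and g₁(0,0) ≠ 0. If a C² transition function φ satisfies φ(0) = 1, φ'(0) = 0, φ''(0) ≠ 0 and g₁(0,0)·φ''(0)·f₁,ᵧᵧ(0,0) > 0, then the function f(x,y) = (f₁(0,y)+g₁(0,y))/2 + φ(x)(f₁(0,y)−g₁(0,y))/2 satisfies f(0,0) = f_x(0,0) = f_y(0,0) = 0, f_xx(0,0) = −g₁(0,0)φ''(0)/2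 ≠ 0, f_xy(0,0) = 0, f_yy(0,0) = f₁,ᵧᵧ(0,0), and f_xx(0,0)·f_yy(0,0) < 0; hence the origin is an SF-transcritical singularity of the regularized system. -/
theorem stmt_12 (f₁ g₁ f₂ g₂ : ℝ → ℝ → ℝ) (φ : ℝ → ℝ) (f : ℝ → ℝ → ℝ)
    (hf₁ : ContDiff ℝ (⊤ : ℕ∞) (Function.uncurry f₁)) (hg₁ : ContDiff ℝ (⊤ : ℕ∞) (Function.uncurry g₁))
    (hφs : ContDiff ℝ 2 φ)
    (hφm : ∀ t ≤ (-1 : ℝ), φ t = -1) (hφp : ∀ t, (1 : ℝ) ≤ t → φ t = 1)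
    (hcusp1 : f₁ 0 0 = 0)
    (hcusp2 : deriv (fun y => f₁ 0 y) 0 = 0)
    (hcusp3 : iteratedDeriv 2 (fun y => f₁ 0 y) 0 ≠ 0)
    (hcusp4 : f₂ 0 0 ≠ 0)
    (hcusp5 : g₁ 0 0 ≠ 0)
    (hφ0 : φ 0 = 1)
    (hφ' : deriv φ 0 = 0)
    (hφ'' : iteratedDeriv 2 φ 0 ≠ 0)
    (hsign : g₁ 0 0 * iteratedDeriv 2 φ 0 * iteratedDeriv 2 (fun y => f₁ 0 y) 0 > 0)
    (hf : ∀ x y, f x y = (f₁ 0 y + g₁ 0 y) / 2 + φ x * (f₁ 0 y - g₁ 0 y) / 2) :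
    f 0 0 = 0 ∧
    deriv (fun x => f x 0) 0 = 0 ∧
    deriv (fun y => f 0 y) 0 = 0 ∧
    iteratedDeriv 2 (fun x => f x 0) 0 = -(g₁ 0 0) * iteratedDeriv 2 φ 0 / 2 ∧
    iteratedDeriv 2 (fun x => f x 0) 0 ≠ 0 ∧
    deriv (fun y => deriv (fun x => f x y) 0) 0 = 0 ∧
    iteratedDeriv 2 (fun y => f 0 y) 0 = iteratedDeriv 2 (fun y => f₁ 0 y) 0 ∧
    iteratedDeriv 2 (fun x => f x 0) 0 * iteratedDeriv 2 (fun y => f 0 y) 0 < 0 := by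
  have hdφ : DifferentiableAt ℝ φ 0 :=
    (hφs.differentiable (by norm_num)).differentiableAt
  -- the slice in x
  have hx : (fun x => f x 0) = fun x => g₁ 0 0 / 2 + (-(g₁ 0 0) / 2) * φ x := by
    funext x; rw [hf, hcusp1]; ring
  have hy : (fun y => f 0 y) = fun y => f₁ 0 y := by
    funext y; rw [hf, hφ0]; ring
  have hxx : iteratedDeriv 2 (fun x => f x 0) 0 = -(g₁ 0 0) * iteratedDeriv 2 φ 0 / 2 := by
    rw [hx, ← iteratedDerivWithin_univ,
      iteratedDerivWithin_const_add (by norm_num),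
      iteratedDerivWithin_const_mul (Set.mem_univ 0) uniqueDiffOn_univ _ hφs.contDiffWithinAt,
      iteratedDerivWithin_univ]
    ring
  have hxxne : iteratedDeriv 2 (fun x => f x 0) 0 ≠ 0 := by
    rw [hxx]
    exact div_ne_zero (mul_ne_zero (neg_ne_zero.mpr hcusp5) hφ'') two_ne_zero
  refine ⟨?_, ?_, ?_, hxx, hxxne, ?_, ?_, ?_⟩
  · rw [hf, hφ0, hcusp1]; ring
  · rw [hx, deriv_const_add, deriv_const_mul _ hdφ, hφ']; ring
  · rw [hy]; exact hcusp2
  · have : (fun y => deriv (fun x => f x y) 0) = fun _ : ℝ => (0 : ℝ) := by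
      funext y
      have h1 : (fun x => f x y) =
          fun x => (f₁ 0 y + g₁ 0 y) / 2 + ((f₁ 0 y - g₁ 0 y) / 2) * φ x := by
        funext x; rw [hf]; ring
      rw [h1, deriv_const_add, deriv_const_mul _ hdφ, hφ', mul_zero]
    rw [this, deriv_const]
  · rw [hy]
  · rw [hxx, hy]
    nlinarith [hsign]
end

section
/- For the PSVF Z_λ with X = (−y² + λ, 1), Y = (1,1), λ ∈ (−1,1), and a family of C² transition functions φ_λ with φ_λ(0) = (1+λ)/(1−λ), φ_λ'(0) = 0 and φ_λ''(0) < 0, the regularized fast function f(x,y) = ((−y²+λ)+1)/2 + φ_λ(x)((−y²+λ)−1)/2 satisfies the SF-transcritical conditions at the origin for every λ ∈ (−1,1): f(0,0) = 0, f_x(0,0) = 0, f_y(0,0) = 0, f_xx(0,0) = (λ−1)φ_λ''(0)/2 ≠ 0, f_xy(0,0) = 0, and f_xx(0,0) f_yy(0,0) < 0. -/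
theorem stmt_14 (lam : ℝ) (hlam : lam ∈ Set.Ioo (-1 : ℝ) 1) (φ : ℝ → ℝ) (f : ℝ → ℝ → ℝ)
    (hφs : ContDiff ℝ 2 φ)
    (hφm : ∀ t ≤ (-1 : ℝ), φ t = -1) (hφp : ∀ t, (1 : ℝ) ≤ t → φ t = 1)
    (hφ0 : φ 0 = (1 + lam) / (1 - lam))
    (hφ' : deriv φ 0 = 0)
    (hφ'' : iteratedDeriv 2 φ 0 < 0)
    (hf : ∀ x y, f x y = ((-y ^ 2 + lam) + 1) / 2 + φ x * ((-y ^ 2 + lam) - 1) / 2) :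
    f 0 0 = 0 ∧
    deriv (fun x => f x 0) 0 = 0 ∧
    deriv (fun y => f 0 y) 0 = 0 ∧
    iteratedDeriv 2 (fun x => f x 0) 0 = (lam - 1) * iteratedDeriv 2 φ 0 / 2 ∧
    iteratedDeriv 2 (fun x => f x 0) 0 ≠ 0 ∧
    deriv (fun y => deriv (fun x => f x y) 0) 0 = 0 ∧
    iteratedDeriv 2 (fun x => f x 0) 0 * iteratedDeriv 2 (fun y => f 0 y) 0 < 0 := by
  obtain ⟨h1, h2⟩ := hlam
  have hlm : (1 : ℝ) - lam > 0 := by linarith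
  have hlm' : (1 : ℝ) - lam ≠ 0 := ne_of_gt hlm
  have hφdiff : Differentiable ℝ φ := hφs.differentiable (by norm_num)
  have hφ'diff : Differentiable ℝ (deriv φ) := by
    have h2 : ContDiff ℝ ((1 : WithTop ℕ∞) + 1) φ := by norm_num; exact hφs
    exact (contDiff_succ_iff_deriv.mp h2).2.2.differentiable (by norm_num)
  -- rewrite x-sections
  have hgx : (fun x => f x 0) = fun x => ((lam - 1) / 2) * φ x + (lam + 1) / 2 := by
    funext x; rw [hf]; ring
  have hgxy : ∀ y : ℝ, (fun x => f x y) =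
      fun x => (((-y ^ 2 + lam) - 1) / 2) * φ x + ((-y ^ 2 + lam) + 1) / 2 := by
    intro y; funext x; rw [hf]; ring
  -- derivative of x-section
  have hdx : ∀ y : ℝ, deriv (fun x => f x y) 0 = 0 := by
    intro y
    rw [hgxy y, deriv_add_const, deriv_const_mul _ (hφdiff 0), hφ', mul_zero]
  -- second derivative data for x-section
  have hd2φ : iteratedDeriv 2 φ 0 = deriv (deriv φ) 0 := by
    simp [iteratedDeriv_succ, iteratedDeriv_zero]
  have hderivgx : deriv (fun x => f x 0) = fun x => ((lam - 1) / 2) * deriv φ x := by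
    funext x
    rw [hgx, deriv_add_const, deriv_const_mul _ (hφdiff x)]
  have hd2x : iteratedDeriv 2 (fun x => f x 0) 0 = (lam - 1) * iteratedDeriv 2 φ 0 / 2 := by
    rw [show (2 : ℕ) = 1 + 1 from rfl, iteratedDeriv_succ, iteratedDeriv_one, hderivgx,
      deriv_const_mul _ (hφ'diff 0), hd2φ]
    ring
  -- y-section
  have hgy : (fun y => f 0 y) = fun y => (-(1 + φ 0) / 2) * y ^ 2 + ((lam + 1) / 2 + φ 0 * (lam - 1) / 2) := by
    funext y; rw [hf]; ring
  have hdy : ∀ y : ℝ, deriv (fun y => f 0 y) y = (-(1 + φ 0)) * y := by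
    intro y
    have h := ((hasDerivAt_pow 2 y).const_mul (-(1 + φ 0) / 2)).add_const
      ((lam + 1) / 2 + φ 0 * (lam - 1) / 2)
    rw [hgy]
    rw [h.deriv]
    push_cast; ring
  have hd2y : iteratedDeriv 2 (fun y => f 0 y) 0 = -(1 + φ 0) := by
    rw [show (2 : ℕ) = 1 + 1 from rfl, iteratedDeriv_succ, iteratedDeriv_one]
    have : deriv (fun y => f 0 y) = fun y => (-(1 + φ 0)) * y := funext hdy
    rw [this]
    have hlin : HasDerivAt (fun y : ℝ => -(1 + φ 0) * y) (-(1 + φ 0) * 1) 0 :=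
      (hasDerivAt_id 0).const_mul _
    rw [hlin.deriv]; ring
  have hφ0pos : -(1 + φ 0) < 0 := by
    rw [hφ0]
    have : (1 : ℝ) + (1 + lam) / (1 - lam) = 2 / (1 - lam) := by field_simp; ring
    rw [this]
    have : 0 < 2 / (1 - lam) := by positivity
    linarith
  have hxxpos : 0 < (lam - 1) * iteratedDeriv 2 φ 0 / 2 := by
    have : lam - 1 < 0 := by linarith
    have := mul_pos_of_neg_of_neg this hφ''
    linarith
  refine ⟨?_, ?_, ?_, hd2x, ?_, ?_, ?_⟩
  · rw [hf, hφ0]; field_simp; ring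
  · exact hdx 0
  · rw [hdy 0, mul_zero]
  · rw [hd2x]; exact ne_of_gt hxxpos
  · have : (fun y : ℝ => deriv (fun x => f x y) 0) = fun _ => (0 : ℝ) := funext hdx
    rw [this, deriv_const]
  · rw [hd2x, hd2y]
    exact mul_neg_of_pos_of_neg hxxpos hφ0pos
end
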